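/- Let X be a nonempty subset of Zar(F) with J(X) = ⋂_{V∈X} 𝔪_V ≠ 0. If A(X) = ⋂_{V∈X} V is a completely integrally closed local ring that is not a valuation ring of F, then lim X contains a subset Y that is closed and perfect in the patch topology of Zar(F) with A(Y) = A(X). -/
import Mathlib


open Set

/-- A subring `V` of a field `F` is a valuation ring of `F` (with quotient field `F`). -/
def IsValSubring (F : Type*) [Field F] (V : Subring F) : Prop :=
  ∀ t : F, t ≠ 0 → t ∈ V ∨ t⁻¹ ∈ V

/-- The Zariski-Riemann space of the field `F`: the set of valuation rings of `F`. -/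
def Zar (F : Type*) [Field F] : Type _ := {V : Subring F // IsValSubring F V}

/-- The patch (constructible) topology on `Zar F`, generated by the sets
`{V : x ∈ V}` and `{V : y ∉ V}` for `x, y ∈ F`. -/
instance Zar.patchTopology (F : Type*) [Field F] : TopologicalSpace (Zar F) :=
  TopologicalSpace.generateFrom
    ({S | ∃ x : F, S = {V : Zar F | x ∈ V.1}} ∪ {S | ∃ y : F, S = {V : Zar F | y ∉ V.1}})

variable {F : Type*} [Field F]

/-- The maximal ideal of a valuation ring of `F`, as a subset of `F`. -/
def mIdeal (V : Zar F) : Set F := {x : F | x ∈ V.1 ∧ (x = 0 ∨ x⁻¹ ∉ V.1)}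

/-- `A(X)`: the intersection of the valuation rings in `X`, as a subset of `F`. -/
def aSet (X : Set (Zar F)) : Set F := ⋂ V ∈ X, ((V : Zar F).1 : Set F)

/-- `A(X)` as a subring of `F`. -/
def ASub (X : Set (Zar F)) : Subring F := ⨅ V ∈ X, (V : Zar F).1

/-- `J(X)`: the intersection of the maximal ideals of the valuation rings in `X`. -/
def jSet (X : Set (Zar F)) : Set F := ⋂ V ∈ X, mIdeal V

/-- The set of limit points of `X` in the patch topology of `Zar F`. -/
def limPts (X : Set (Zar F)) : Set (Zar F) :=
  {V : Zar F | ∀ U : Set (Zar F), IsOpen U → V ∈ U → ∃ W ∈ X, W ≠ V ∧ W ∈ U}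


/-- A subring `A` of `F` is completely integrally closed: every element of `F`
almost integral over `A` belongs to `A`. -/
def IsCIC (A : Subring F) : Prop :=
  ∀ t : F, (∃ a : F, a ∈ A ∧ a ≠ 0 ∧ ∀ n : ℕ, 0 < n → a * t ^ n ∈ A) → t ∈ A

section Aux

namespace ZarAux

/-! ### Basic open sets -/

lemma isOpen_memSet (x : F) : IsOpen {V : Zar F | x ∈ V.1} :=
  TopologicalSpace.GenerateOpen.basic _ (Or.inl ⟨x, rfl⟩)

lemma isOpen_notMemSet (y : F) : IsOpen {V : Zar F | y ∉ V.1} :=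
  TopologicalSpace.GenerateOpen.basic _ (Or.inr ⟨y, rfl⟩)

lemma isClosed_memSet (x : F) : IsClosed {V : Zar F | x ∈ V.1} := by
  have h : IsOpen {V : Zar F | x ∉ V.1} := isOpen_notMemSet x
  have : {V : Zar F | x ∈ V.1} = {V : Zar F | x ∉ V.1}ᶜ := by
    ext V; simp
  rw [this]
  exact isClosed_compl_iff.mpr h

lemma isClosed_notMemSet (x : F) : IsClosed {V : Zar F | x ∉ V.1} := by
  have h : IsOpen {V : Zar F | x ∈ V.1} := isOpen_memSet x
  exact isClosed_compl_iff.mpr h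

/-! ### Valuation ring basics -/

lemma inv_mem_of_notMem (V : Zar F) {x : F} (hx : x ∉ V.1) : x⁻¹ ∈ V.1 := by
  have hx0 : x ≠ 0 := by rintro rfl; exact hx (zero_mem _)
  rcases V.2 x hx0 with h | h
  · exact absurd h hx
  · exact h

lemma ne_zero_of_notMem (V : Zar F) {x : F} (hx : x ∉ V.1) : x ≠ 0 := by
  rintro rfl; exact hx (zero_mem _)

lemma mul_notMem (V : Zar F) {x y : F} (hx : x ∉ V.1) (hy : y ∉ V.1) : x * y ∉ V.1 := by
  intro hxy
  have hx0 : x ≠ 0 := ne_zero_of_notMem V hx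
  have : y = x⁻¹ * (x * y) := by field_simp
  exact hy (this ▸ mul_mem (inv_mem_of_notMem V hx) hxy)

lemma pow_notMem (V : Zar F) {x : F} (hx : x ∉ V.1) {k : ℕ} (hk : 1 ≤ k) : x ^ k ∉ V.1 := by
  induction k, hk using Nat.le_induction with
  | base => simpa using hx
  | succ n hn ih => rw [pow_succ]; exact mul_notMem V ih hx

/-! ### `mIdeal` basics -/

lemma mIdeal_mem (V : Zar F) {x : F} (hx : x ∈ mIdeal V) : x ∈ V.1 := hx.1

lemma inv_notMem_of_mem_mIdeal (V : Zar F) {x : F} (hx : x ∈ mIdeal V) (hx0 : x ≠ 0) :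
    x⁻¹ ∉ V.1 := hx.2.resolve_left hx0

lemma zero_mem_mIdeal (V : Zar F) : (0 : F) ∈ mIdeal V := ⟨zero_mem _, Or.inl rfl⟩

lemma mul_mem_mIdeal (V : Zar F) {x w : F} (hx : x ∈ mIdeal V) (hw : w ∈ V.1) :
    x * w ∈ mIdeal V := by
  refine ⟨mul_mem hx.1 hw, ?_⟩
  by_cases h0 : x * w = 0
  · exact Or.inl h0
  have hx0 : x ≠ 0 := fun h => h0 (by simp [h])
  refine Or.inr fun hmem => ?_
  have : x⁻¹ = w * (x * w)⁻¹ := by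
    have hw0 : w ≠ 0 := fun h => h0 (by simp [h])
    field_simp
  exact inv_notMem_of_mem_mIdeal V hx hx0 (this ▸ mul_mem hw hmem)

lemma neg_mem_mIdeal (V : Zar F) {x : F} (hx : x ∈ mIdeal V) : -x ∈ mIdeal V := by
  refine ⟨neg_mem hx.1, ?_⟩
  by_cases h0 : x = 0
  · exact Or.inl (by simp [h0])
  refine Or.inr fun hmem => ?_
  rw [inv_neg] at hmem
  exact inv_notMem_of_mem_mIdeal V hx h0 (by simpa using neg_mem hmem)

lemma inv_mem_mIdeal_of_notMem (V : Zar F) {g : F} (hg : g ∉ V.1) : g⁻¹ ∈ mIdeal V := by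
  refine ⟨inv_mem_of_notMem V hg, Or.inr ?_⟩
  rw [inv_inv]; exact hg

lemma add_mem_mIdeal (V : Zar F) {x y : F} (hx : x ∈ mIdeal V) (hy : y ∈ mIdeal V) :
    x + y ∈ mIdeal V := by
  by_cases hx0 : x = 0
  · simpa [hx0] using hy
  by_cases hy0 : y = 0
  · simpa [hy0] using hx
  have hmem : x + y ∈ V.1 := add_mem hx.1 hy.1
  by_cases hs0 : x + y = 0
  · exact ⟨hmem, Or.inl hs0⟩
  refine ⟨hmem, Or.inr fun hinv => ?_⟩
  have hd0 : x * y⁻¹ ≠ 0 := by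
    simp [hx0, hy0]
  rcases V.2 (x * y⁻¹) hd0 with h | h
  · -- y⁻¹ = (1 + x*y⁻¹) * (x+y)⁻¹
    have : y⁻¹ = (1 + x * y⁻¹) * (x + y)⁻¹ := by
      field_simp
      ring
    exact inv_notMem_of_mem_mIdeal V hy hy0
      (this ▸ mul_mem (add_mem (one_mem _) h) hinv)
  · rw [mul_inv, inv_inv] at h
    have : x⁻¹ = (1 + x⁻¹ * y) * (x + y)⁻¹ := by
      field_simp
      try ring
    exact inv_notMem_of_mem_mIdeal V hx hx0
      (this ▸ mul_mem (add_mem (one_mem _) h) hinv)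

lemma one_add_mem_mIdeal (V : Zar F) {g : F} (hg : g ∈ mIdeal V) :
    (1 + g) ∈ V.1 ∧ (1 + g)⁻¹ ∈ V.1 := by
  have h1 : (1 : F) + g ∈ V.1 := add_mem (one_mem _) hg.1
  refine ⟨h1, ?_⟩
  by_contra hinv
  have hne : (1 : F) + g ≠ 0 := by
    intro h0
    exact hinv (by rw [h0]; simpa using (zero_mem V.1))
  have hm : (1 + g) ∈ mIdeal V := ⟨h1, Or.inr hinv⟩
  have : (1 : F) ∈ mIdeal V := by
    have := add_mem_mIdeal V hm (neg_mem_mIdeal V hg)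
    simpa using this
  rcases this.2 with h | h
  · exact one_ne_zero h
  · exact h (by simpa using (one_mem V.1))

/-! ### membership lemmas for `aSet`/`ASub` -/

lemma mem_aSet_iff {X : Set (Zar F)} {x : F} : x ∈ aSet X ↔ ∀ V ∈ X, x ∈ V.1 := by
  simp [aSet]

lemma mem_ASub_iff {X : Set (Zar F)} {x : F} : x ∈ ASub X ↔ ∀ V ∈ X, x ∈ V.1 := by
  simp [ASub, Subring.mem_iInf]

lemma aSet_eq_coe_ASub (X : Set (Zar F)) : aSet X = (ASub X : Set F) := by
  ext x
  simp [mem_aSet_iff, mem_ASub_iff]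

lemma aSet_antitone {X Y : Set (Zar F)} (h : X ⊆ Y) : aSet Y ⊆ aSet X := by
  intro x hx
  rw [mem_aSet_iff] at hx ⊢
  exact fun V hV => hx V (h hV)

end ZarAux

end Aux
section Aux2

namespace ZarAux

variable (F) in
private def gens : Set (Set (Zar F)) :=
  ({S | ∃ x : F, S = {V : Zar F | x ∈ V.1}} ∪ {S | ∃ y : F, S = {V : Zar F | y ∉ V.1}})

lemma mem_f_of_isOpen {f : Ultrafilter (Zar F)} {a : Zar F}
    (hgen : ∀ s ∈ gens F, a ∈ s → s ∈ f) {U : Set (Zar F)} (hU : IsOpen U) (haU : a ∈ U) :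
    U ∈ f := by
  have hU' : TopologicalSpace.GenerateOpen (gens F) U := hU
  clear hU
  revert haU
  induction hU' with
  | basic s hs => exact hgen s hs
  | univ => exact fun _ => Filter.univ_mem
  | inter s t _ _ ihs iht => exact fun h => Filter.inter_mem (ihs h.1) (iht h.2)
  | sUnion S _ ih =>
    rintro ⟨s, hsS, has⟩
    exact Filter.mem_of_superset (ih s hsS has) (subset_sUnion_of_mem hsS)

/-- the limit valuation ring of an ultrafilter -/
private def limSubring (f : Ultrafilter (Zar F)) : Subring F where
  carrier := {x : F | {V : Zar F | x ∈ V.1} ∈ f}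
  one_mem' := by
    have : {V : Zar F | (1 : F) ∈ V.1} = univ := by
      ext V; simp [one_mem]
    simp only [Set.mem_setOf_eq, this]
    exact Filter.univ_mem
  zero_mem' := by
    have : {V : Zar F | (0 : F) ∈ V.1} = univ := by
      ext V; simp [zero_mem]
    simp only [Set.mem_setOf_eq, this]
    exact Filter.univ_mem
  mul_mem' := by
    intro a b ha hb
    refine Filter.mem_of_superset (Filter.inter_mem ha hb) ?_
    intro V hV
    have h1 : a ∈ V.1 := hV.1
    have h2 : b ∈ V.1 := hV.2
    show a * b ∈ V.1
    exact mul_mem h1 h2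
  add_mem' := by
    intro a b ha hb
    refine Filter.mem_of_superset (Filter.inter_mem ha hb) ?_
    intro V hV
    have h1 : a ∈ V.1 := hV.1
    have h2 : b ∈ V.1 := hV.2
    show a + b ∈ V.1
    exact add_mem h1 h2
  neg_mem' := by
    intro a ha
    refine Filter.mem_of_superset ha ?_
    intro V hV
    have h1 : a ∈ V.1 := hV
    show -a ∈ V.1
    exact neg_mem h1

private lemma limSubring_isVal (f : Ultrafilter (Zar F)) : IsValSubring F (limSubring f) := by
  intro t ht
  by_contra hc
  push_neg at hc
  obtain ⟨h1, h2⟩ := hc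
  have h1' : {V : Zar F | t ∈ V.1}ᶜ ∈ f := Ultrafilter.compl_mem_iff_notMem.2 h1
  have h2' : {V : Zar F | t⁻¹ ∈ V.1}ᶜ ∈ f := Ultrafilter.compl_mem_iff_notMem.2 h2
  have hmem := Filter.inter_mem h1' h2'
  have : ({V : Zar F | t ∈ V.1}ᶜ ∩ {V : Zar F | t⁻¹ ∈ V.1}ᶜ) = ∅ := by
    ext V
    simp only [Set.mem_inter_iff, Set.mem_compl_iff, Set.mem_setOf_eq, Set.mem_empty_iff_false,
      iff_false, not_and, not_not]
    intro hV
    rcases V.2 t ht with h | h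
    · exact absurd h hV
    · exact h
  rw [this] at hmem
  exact Filter.empty_notMem (f : Filter (Zar F)) hmem

instance : CompactSpace (Zar F) := by
  rw [← isCompact_univ_iff, isCompact_iff_ultrafilter_le_nhds]
  intro f _
  set a : Zar F := ⟨limSubring f, limSubring_isVal f⟩ with ha
  refine ⟨a, mem_univ _, ?_⟩
  rw [le_nhds_iff]
  intro s hs hsopen
  refine mem_f_of_isOpen ?_ hsopen hs
  rintro U (⟨x, rfl⟩ | ⟨y, rfl⟩) haU
  · exact haU
  · have : {V : Zar F | y ∈ V.1} ∉ f := haU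
    have hc := Ultrafilter.compl_mem_iff_notMem.2 this
    refine Filter.mem_of_superset hc ?_
    intro V hV
    exact hV

lemma isClosed_singleton (V : Zar F) : IsClosed ({V} : Set (Zar F)) := by
  rw [← isOpen_compl_iff]
  rw [isOpen_iff_forall_mem_open]
  intro W hW
  have hne : W ≠ V := by simpa using hW
  have hne' : ¬ (W.1 = V.1) := fun h => hne (Subtype.ext h)
  have : ∃ x : F, ¬ (x ∈ W.1 ↔ x ∈ V.1) := by
    by_contra hc
    push_neg at hc
    exact hne' (SetLike.ext fun x => hc x)
  obtain ⟨x, hx⟩ := this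
  by_cases hxW : x ∈ W.1
  · have hxV : x ∉ V.1 := fun h => hx ⟨fun _ => h, fun _ => hxW⟩
    refine ⟨{Z : Zar F | x ∈ Z.1}, ?_, isOpen_memSet x, hxW⟩
    intro Z hZ
    simp only [Set.mem_compl_iff, Set.mem_singleton_iff]
    rintro rfl
    exact hxV hZ
  · have hxV : x ∈ V.1 := by
      by_contra hxV
      exact hx ⟨fun h => absurd h hxW, fun h => absurd h hxV⟩
    refine ⟨{Z : Zar F | x ∉ Z.1}, ?_, isOpen_notMemSet x, hxW⟩
    intro Z hZ
    simp only [Set.mem_compl_iff, Set.mem_singleton_iff]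
    rintro rfl
    exact hZ hxV

end ZarAux

end Aux2
section Core

namespace ZarAux

open Classical in
/-- Core lemma: if `A(C)` is a local, completely integrally closed ring, `j` is a nonzero
element in all the maximal ideals of members of `C`, and `t ∉ A(C)` is excluded by only
finitely many members of `C` (but not all), we get a contradiction. -/
lemma core (C : Set (Zar F)) (j t : F) (hj0 : j ≠ 0)
    (hjC : ∀ W ∈ C, j ∈ mIdeal W)
    (hloc : IsLocalRing (ASub C)) (hcic : IsCIC (ASub C))
    (ht : t ∉ aSet C)
    (hEfin : {W : Zar F | W ∈ C ∧ t ∉ W.1}.Finite)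
    (hS : ∃ W ∈ C, t ∈ W.1) : False := by
  classical
  have ht0 : t ≠ 0 := by
    rintro rfl
    exact ht (mem_aSet_iff.2 fun V _ => zero_mem _)
  have hjA : j ∈ ASub C := mem_ASub_iff.2 fun V hV => (hjC V hV).1
  -- the "hard excluders"
  set E : Set (Zar F) := {W : Zar F | W ∈ C ∧ ∃ n : ℕ, j * t ^ n ∉ W.1} with hE
  have hEsub : E ⊆ {W : Zar F | W ∈ C ∧ t ∉ W.1} := by
    rintro W ⟨hWC, n, hn⟩
    refine ⟨hWC, fun htW => hn ?_⟩
    exact mul_mem ((hjC W hWC).1) (pow_mem htW n)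
  have hEfin' : E.Finite := hEfin.subset hEsub
  -- the easy case: no hard excluders
  by_cases hEne : E.Nonempty
  swap
  · -- every `W ∈ C` contains all `j * t^n`, so `t` is almost integral over `A(C)`
    have hall : ∀ W ∈ C, ∀ n : ℕ, j * t ^ n ∈ W.1 := by
      intro W hWC n
      by_contra hn
      exact hEne ⟨W, hWC, n, hn⟩
    have : t ∈ ASub C := by
      refine hcic t ⟨j, hjA, hj0, fun n _ => ?_⟩
      exact mem_ASub_iff.2 fun W hW => hall W hW n
    rw [aSet_eq_coe_ASub] at ht
    exact ht this
  -- the main case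
  obtain ⟨W₀, hW₀⟩ := hEne
  -- choose exponents witnessing exclusion
  have hnotmem_mono : ∀ W : Zar F, t ∉ W.1 → ∀ n m : ℕ, n ≤ m → j * t ^ n ∉ W.1 →
      j * t ^ m ∉ W.1 := by
    intro W htW n m hnm hn
    rcases Nat.eq_or_lt_of_le hnm with rfl | hlt
    · exact hn
    have hkey : j * t ^ m = (j * t ^ n) * t ^ (m - n) := by
      rw [mul_assoc, ← pow_add, Nat.add_sub_cancel' hnm]
    rw [hkey]
    exact mul_notMem W hn (pow_notMem W htW (by omega))
  set nf : Zar F → ℕ := fun W =>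
    if h : ∃ n : ℕ, j * t ^ n ∉ W.1 then h.choose else 0 with hnf
  have hnfspec : ∀ W ∈ E, j * t ^ (nf W) ∉ W.1 := by
    rintro W ⟨hWC, hex⟩
    simp only [hnf, dif_pos hex]
    exact hex.choose_spec
  set N : ℕ := hEfin'.toFinset.sup nf with hN
  have hnfle : ∀ W ∈ E, nf W ≤ N := by
    intro W hW
    exact Finset.le_sup (hEfin'.mem_toFinset.2 hW)
  set b : ℕ := 2 * N with hb
  set g : F := j * (j * t ^ b) with hg
  have hg0 : g ≠ 0 := by
    simp [hg, hj0, ht0]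
  -- g is excluded by every W in E
  have hgE : ∀ W ∈ E, g ∉ W.1 := by
    intro W hWE
    have htW : t ∉ W.1 := (hEsub hWE).2
    have h1 : j * t ^ (nf W) ∉ W.1 := hnfspec W hWE
    have hle : nf W ≤ N := hnfle W hWE
    have h2 : j * t ^ (b - nf W) ∉ W.1 :=
      hnotmem_mono W htW (nf W) (b - nf W) (by omega) h1
    have hkey : g = (j * t ^ (nf W)) * (j * t ^ (b - nf W)) := by
      have h' : nf W + (b - nf W) = b := by omega
      calc g = j * (j * t ^ (nf W + (b - nf W))) := by rw [h']
        _ = (j * t ^ (nf W)) * (j * t ^ (b - nf W)) := by rw [pow_add]; ring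
    rw [hkey]
    exact mul_notMem W h1 h2
  -- g is in the maximal ideal of every other W ∈ C
  have hgC : ∀ W ∈ C, W ∉ E → g ∈ mIdeal W := by
    intro W hWC hWE
    have hall : ∀ n : ℕ, j * t ^ n ∈ W.1 := by
      intro n
      by_contra hn
      exact hWE ⟨hWC, n, hn⟩
    exact mul_mem_mIdeal W (hjC W hWC) (hall b)
  -- 1 + g ≠ 0
  have h1g0 : (1 : F) + g ≠ 0 := by
    intro h0
    have : g = -1 := by linear_combination h0
    exact hgE W₀ hW₀ (this ▸ neg_mem (one_mem _))
  set x : F := (1 + g)⁻¹ with hx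
  set y : F := g * (1 + g)⁻¹ with hy
  have hxy : x + y = 1 := by
    rw [hx, hy]
    field_simp
  have hx0 : x ≠ 0 := inv_ne_zero h1g0
  have hy0 : y ≠ 0 := mul_ne_zero hg0 hx0
  -- memberships for W ∉ E
  have hmem1 : ∀ W ∈ C, W ∉ E → x ∈ W.1 ∧ y ∈ mIdeal W := by
    intro W hWC hWE
    have hgm := hgC W hWC hWE
    obtain ⟨h1, h2⟩ := one_add_mem_mIdeal W hgm
    exact ⟨h2, mul_mem_mIdeal W hgm h2⟩
  -- memberships for W ∈ E
  have hmem2 : ∀ W ∈ E, x ∈ mIdeal W ∧ y ∈ W.1 := by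
    intro W hWE
    have hgnW : g ∉ W.1 := hgE W hWE
    have hginv : g⁻¹ ∈ mIdeal W := inv_mem_mIdeal_of_notMem W hgnW
    obtain ⟨hu1, hu2⟩ := one_add_mem_mIdeal W hginv
    have hxeq : x = g⁻¹ * (1 + g⁻¹)⁻¹ := by
      rw [hx, ← mul_inv]
      congr 1
      field_simp
      ring
    have hne2 : (1 : F) + g⁻¹ ≠ 0 := by
      intro h
      apply h1g0
      have hinv : g⁻¹ = -1 := by linear_combination h
      have hg' : g = -1 := by
        have := congrArg (fun w : F => w⁻¹) hinv
        simp only [inv_inv] at this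
        rw [this]
        norm_num
      rw [hg']; ring
    have hmul : (1 + g⁻¹) * (g * (1 + g)⁻¹) = 1 := by
      field_simp
      ring
    have hyeq : y = (1 + g⁻¹)⁻¹ := by
      rw [hy]
      exact (inv_eq_of_mul_eq_one_right hmul).symm
    constructor
    · rw [hxeq]
      exact mul_mem_mIdeal W hginv hu2
    · rw [hyeq]
      exact hu2
  have hxA : x ∈ ASub C := by
    refine mem_ASub_iff.2 fun W hW => ?_
    by_cases hWE : W ∈ E
    · exact (hmem2 W hWE).1.1
    · exact (hmem1 W hW hWE).1
  have hyA : y ∈ ASub C := by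
    refine mem_ASub_iff.2 fun W hW => ?_
    by_cases hWE : W ∈ E
    · exact (hmem2 W hWE).2
    · exact (hmem1 W hW hWE).2.1
  -- contradiction with locality
  haveI := hloc
  have hsum : (⟨x, hxA⟩ : ASub C) + ⟨y, hyA⟩ = 1 := by
    ext
    push_cast
    exact hxy
  rcases IsLocalRing.isUnit_or_isUnit_of_add_one hsum with hu | hu
  · obtain ⟨z, hz⟩ := hu.exists_right_inv
    have hz' : x * (z : F) = 1 := by
      have := congrArg (fun w : ASub C => (w : F)) hz
      push_cast at this
      exact this
    have hzx : (z : F) = x⁻¹ := (inv_eq_of_mul_eq_one_right hz').symm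
    have hxm : x ∈ mIdeal W₀ := (hmem2 W₀ hW₀).1
    have : x⁻¹ ∉ W₀.1 := inv_notMem_of_mem_mIdeal W₀ hxm hx0
    exact this (hzx ▸ (mem_ASub_iff.1 z.2 W₀ hW₀.1))
  · obtain ⟨W₁, hW₁C, hW₁t⟩ := hS
    have hW₁E : W₁ ∉ E := fun h => (hEsub h).2 hW₁t
    obtain ⟨z, hz⟩ := hu.exists_right_inv
    have hz' : y * (z : F) = 1 := by
      have := congrArg (fun w : ASub C => (w : F)) hz
      push_cast at this
      exact this
    have hzy : (z : F) = y⁻¹ := (inv_eq_of_mul_eq_one_right hz').symm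
    have hym : y ∈ mIdeal W₁ := (hmem1 W₁ hW₁C hW₁E).2
    have : y⁻¹ ∉ W₁.1 := inv_notMem_of_mem_mIdeal W₁ hym hy0
    exact this (hzy ▸ (mem_ASub_iff.1 z.2 W₁ hW₁C))

end ZarAux

end Core
section Key

namespace ZarAux

lemma aSet_singleton (V : Zar F) : aSet ({V} : Set (Zar F)) = (V.1 : Set F) := by
  simp [aSet]

lemma keyLemma (X C : Set (Zar F)) (hCcl : IsClosed C) (hAC : aSet C = aSet X)
    (j : F) (hj0 : j ≠ 0) (hjC : ∀ W ∈ C, j ∈ mIdeal W)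
    (hcic : IsCIC (ASub X)) (hloc : IsLocalRing (ASub X))
    (hnv : ¬ IsValSubring F (ASub X)) :
    ∃ Y, Y ⊆ C ∧ IsClosed Y ∧ Y ⊆ limPts Y ∧ aSet Y = aSet X := by
  classical
  have hsub_aux : ∀ Y : Set (Zar F), Y ⊆ C → aSet X ⊆ aSet Y := by
    intro Y hY
    rw [← hAC]
    exact aSet_antitone hY
  set S : Set (Set (Zar F)) := {Y | Y ⊆ C ∧ IsClosed Y ∧ aSet Y = aSet X} with hs
  have hCS : C ∈ S := ⟨Subset.rfl, hCcl, hAC⟩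
  have hzorn := zorn_superset_nonempty S ?_ C hCS
  · obtain ⟨m, hmC, hmin⟩ := hzorn
    obtain ⟨⟨hmsubC, hmcl, hma⟩, hminimal⟩ := hmin
    refine ⟨m, hmsubC, hmcl, ?_, hma⟩
    -- m is perfect
    intro V hVm
    by_contra hVlim
    simp only [limPts, Set.mem_setOf_eq] at hVlim
    push_neg at hVlim
    obtain ⟨U, hUopen, hVU, hUiso⟩ := hVlim
    -- hUiso : ∀ W ∈ m, W ≠ V → W ∉ U
    set m' : Set (Zar F) := m \ {V} with hm'
    have hm'eq : m' = m ∩ Uᶜ := by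
      ext W
      simp only [hm', Set.mem_diff, Set.mem_singleton_iff, Set.mem_inter_iff, Set.mem_compl_iff]
      constructor
      · rintro ⟨hWm, hWV⟩
        exact ⟨hWm, hUiso W hWm hWV⟩
      · rintro ⟨hWm, hWU⟩
        refine ⟨hWm, fun h => hWU ?_⟩
        rw [h]; exact hVU
    have hm'cl : IsClosed m' := by
      rw [hm'eq]
      exact hmcl.inter (isClosed_compl_iff.2 hUopen)
    have hm'C : m' ⊆ C := fun W hW => hmsubC hW.1
    have hm'ne_aSet : aSet m' ≠ aSet X := by
      intro h
      have := hminimal ⟨hm'C, hm'cl, h⟩ (diff_subset)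
      exact (this hVm).2 rfl
    obtain ⟨t, htm', htX⟩ : ∃ t, t ∈ aSet m' ∧ t ∉ aSet X := by
      by_contra hc
      push_neg at hc
      exact hm'ne_aSet (Subset.antisymm hc (hsub_aux m' hm'C))
    by_cases hm'empty : m'.Nonempty
    · -- apply the core lemma to `m`
      have hASm : ASub m = ASub X := by
        apply SetLike.ext'
        rw [← aSet_eq_coe_ASub, ← aSet_eq_coe_ASub, hma]
      refine core m j t hj0 (fun W hW => hjC W (hmsubC hW)) (hASm ▸ hloc) (hASm ▸ hcic) ?_ ?_ ?_
      · rw [hma]; exact htX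
      · apply Set.Finite.subset (Set.finite_singleton V)
        rintro W ⟨hWm, hWt⟩
        by_contra hWV
        exact hWt (mem_aSet_iff.1 htm' W ⟨hWm, hWV⟩)
      · obtain ⟨W, hW⟩ := hm'empty
        exact ⟨W, hW.1, mem_aSet_iff.1 htm' W hW⟩
    · -- m = {V}, so A(X) is a valuation ring: contradiction
      rw [Set.not_nonempty_iff_eq_empty] at hm'empty
      have hmV : m = {V} := by
        apply Subset.antisymm
        · intro W hW
          by_contra hWV
          have : W ∈ m' := ⟨hW, hWV⟩
          rw [hm'empty] at this
          exact this
        · intro W hW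
          rw [Set.mem_singleton_iff] at hW
          rw [hW]; exact hVm
      have hmemX : ∀ s : F, s ∈ ASub X ↔ s ∈ V.1 := by
        intro s
        rw [← SetLike.mem_coe, ← aSet_eq_coe_ASub, ← hma, hmV, aSet_singleton]
        rfl
      apply hnv
      intro s hs
      rcases V.2 s hs with h | h
      · exact Or.inl ((hmemX s).2 h)
      · exact Or.inr ((hmemX s⁻¹).2 h)
  · -- chains have lower bounds
    intro c hcS hchain hcne
    refine ⟨⋂₀ c, ⟨?_, ?_, ?_⟩, fun s hs => sInter_subset_of_mem hs⟩
    · obtain ⟨Y₀, hY₀⟩ := hcne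
      exact (sInter_subset_of_mem hY₀).trans (hcS hY₀).1
    · exact isClosed_sInter fun Y hY => (hcS hY).2.1
    · have hlbC : ⋂₀ c ⊆ C := by
        obtain ⟨Y₀, hY₀⟩ := hcne
        exact (sInter_subset_of_mem hY₀).trans (hcS hY₀).1
      apply Subset.antisymm
      swap
      · exact hsub_aux _ hlbC
      -- hard direction via compactness
      intro t htlb
      by_contra htX
      set T : Set (Zar F) := {W : Zar F | t ∉ W.1} with hT
      set S' : Set (Set (Zar F)) := (fun Y => Y ∩ T) '' c with hS'
      haveI : Nonempty ↥S' := by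
        obtain ⟨Y₀, hY₀⟩ := hcne
        exact ⟨⟨Y₀ ∩ T, ⟨Y₀, hY₀, rfl⟩⟩⟩
      have hdir : DirectedOn (· ⊇ ·) S' := by
        rintro _ ⟨Y₁, hY₁, rfl⟩ _ ⟨Y₂, hY₂, rfl⟩
        rcases eq_or_ne Y₁ Y₂ with rfl | hne
        · exact ⟨Y₁ ∩ T, ⟨Y₁, hY₁, rfl⟩, Subset.rfl, Subset.rfl⟩
        rcases hchain hY₁ hY₂ hne with h | h
        · exact ⟨Y₁ ∩ T, ⟨Y₁, hY₁, rfl⟩, Subset.rfl, inter_subset_inter_left T h⟩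
        · exact ⟨Y₂ ∩ T, ⟨Y₂, hY₂, rfl⟩, inter_subset_inter_left T h, Subset.rfl⟩
      have hnonempty : ∀ U ∈ S', U.Nonempty := by
        rintro _ ⟨Y, hY, rfl⟩
        have haY : aSet Y = aSet X := (hcS hY).2.2
        by_contra hc
        rw [Set.not_nonempty_iff_eq_empty] at hc
        apply htX
        rw [← haY]
        refine mem_aSet_iff.2 fun W hW => ?_
        by_contra hWt
        have hmem : W ∈ Y ∩ T := ⟨hW, hWt⟩
        have : W ∈ (∅ : Set (Zar F)) := hc ▸ hmem
        exact this
      have hclosed : ∀ U ∈ S', IsClosed U := by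
        rintro _ ⟨Y, hY, rfl⟩
        exact ((hcS hY).2.1).inter (isClosed_notMemSet t)
      have hcompact : ∀ U ∈ S', IsCompact U := fun U hU => (hclosed U hU).isCompact
      obtain ⟨W, hW⟩ := IsCompact.nonempty_sInter_of_directed_nonempty_isCompact_isClosed
        hdir hnonempty hcompact hclosed
      have hWlb : W ∈ ⋂₀ c := by
        intro Y hY
        exact (hW (Y ∩ T) ⟨Y, hY, rfl⟩).1
      have hWT : W ∈ T := by
        obtain ⟨Y₀, hY₀⟩ := hcne
        exact (hW (Y₀ ∩ T) ⟨Y₀, hY₀, rfl⟩).2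
      exact hWT (mem_aSet_iff.1 htlb W hWlb)

end ZarAux

end Key

open ZarAux

theorem stmt11 (X : Set (Zar F)) (hX : X.Nonempty) (hJ : jSet X ≠ {0})
    (hcic : IsCIC (ASub X)) (hloc : IsLocalRing (ASub X))
    (hnv : ¬ IsValSubring F (ASub X)) :
    ∃ Y ⊆ limPts X, IsClosed Y ∧ Y ⊆ limPts Y ∧ aSet Y = aSet X := by
  classical
  -- extract a nonzero element of J(X)
  have hJ0 : (0 : F) ∈ jSet X := by
    simp only [jSet, Set.mem_iInter]
    intro V _
    exact zero_mem_mIdeal V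
  obtain ⟨j, hjJ, hj0⟩ : ∃ j, j ∈ jSet X ∧ j ≠ 0 := by
    by_contra hc
    push_neg at hc
    apply hJ
    apply Subset.antisymm
    · intro x hx
      rcases eq_or_ne x 0 with rfl | hne
      · rfl
      · exact absurd hne (not_ne_iff.2 (hc x hx))
    · rintro x rfl
      exact hJ0
  have hjX : ∀ V ∈ X, j ∈ mIdeal V := by
    intro V hV
    simp only [jSet, Set.mem_iInter] at hjJ
    exact hjJ V hV
  have hjaX : j ∈ aSet X := mem_aSet_iff.2 fun V hV => (hjX V hV).1
  set L : Set (Zar F) := limPts X with hL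
  -- every limit point contains A(X)
  have hL_mem : ∀ W ∈ L, ∀ x ∈ aSet X, x ∈ W.1 := by
    intro W hW x hx
    by_contra hc
    obtain ⟨W', hW'X, _, hW'U⟩ := hW {Z : Zar F | x ∉ Z.1} (isOpen_notMemSet x) hc
    exact hW'U (mem_aSet_iff.1 hx W' hW'X)
  -- j is in the maximal ideal of every limit point
  have hjL : ∀ W ∈ L, j ∈ mIdeal W := by
    intro W hW
    refine ⟨hL_mem W hW j hjaX, Or.inr ?_⟩
    intro hc
    obtain ⟨W', hW'X, _, hW'U⟩ := hW {Z : Zar F | j⁻¹ ∈ Z.1} (isOpen_memSet j⁻¹) hc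
    exact (inv_notMem_of_mem_mIdeal W' (hjX W' hW'X) hj0) hW'U
  set C : Set (Zar F) := X ∪ L with hC
  have hjC : ∀ W ∈ C, j ∈ mIdeal W := by
    rintro W (hW | hW)
    · exact hjX W hW
    · exact hjL W hW
  -- C is closed
  have hCcl : IsClosed C := by
    rw [← isOpen_compl_iff, isOpen_iff_forall_mem_open]
    intro V hV
    rw [Set.mem_compl_iff, hC, Set.mem_union, not_or] at hV
    obtain ⟨hVX, hVL⟩ := hV
    simp only [hL, limPts, Set.mem_setOf_eq] at hVL
    push_neg at hVL
    obtain ⟨U, hUopen, hVU, hUiso⟩ := hVL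
    have hUX : ∀ W ∈ X, W ∈ U → False := by
      intro W hWX hWU
      rcases eq_or_ne W V with rfl | hne
      · exact hVX hWX
      · exact (hUiso W hWX hne) hWU
    refine ⟨U, ?_, hUopen, hVU⟩
    intro Z hZU
    rw [Set.mem_compl_iff, hC, Set.mem_union, not_or]
    constructor
    · exact fun hZX => hUX Z hZX hZU
    · intro hZL
      obtain ⟨W', hW'X, _, hW'U⟩ := hZL U hUopen hZU
      exact hUX W' hW'X hW'U
  have hAC : aSet C = aSet X := by
    apply Subset.antisymm
    · exact aSet_antitone subset_union_left
    · intro x hx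
      refine mem_aSet_iff.2 ?_
      rintro W (hW | hW)
      · exact mem_aSet_iff.1 hx W hW
      · exact hL_mem W hW x hx
  obtain ⟨Y, hYC, hYcl, hYperf, hYa⟩ :=
    keyLemma X C hCcl hAC j hj0 hjC hcic hloc hnv
  refine ⟨Y, ?_, hYcl, hYperf, hYa⟩
  -- Y ⊆ limPts X
  intro V hVY
  have hVlim : V ∈ limPts Y := hYperf hVY
  intro U hUopen hVU
  obtain ⟨Z, hZY, hZne, hZU⟩ := hVlim U hUopen hVU
  rcases hYC hZY with hZX | hZL
  · exact ⟨Z, hZX, hZne, hZU⟩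
  · set U' : Set (Zar F) := U ∩ {V}ᶜ with hU'
    have hU'open : IsOpen U' := hUopen.inter (isClosed_singleton V).isOpen_compl
    have hZU' : Z ∈ U' := ⟨hZU, by simpa using hZne⟩
    obtain ⟨W', hW'X, _, hW'U'⟩ := hZL U' hU'open hZU'
    refine ⟨W', hW'X, ?_, hW'U'.1⟩
    simpa using hW'U'.2
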